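/- For every natural number n ≥ 1 and every real x, the n-th derivative of the logistic function is bounded: |σ^(n)(x)| ≤ n! · ∑_{k=1}^{n+1} S(n+1,k). -/

import Mathlib

/-!
Since `σ' = σ (1 - σ)`, every derivative of `σ` is a polynomial in `σ`. Differentiating
`∑ cₖ σ^(k+1)` turns the coefficients into `(k + 1) cₖ - k cₖ₋₁`, which is exactly the recurrence of
Stirling numbers of the second kind once `cₖ = (-1)^k k! S(n+1, k+1)`. As `0 < σ < 1` and
`k! ≤ n!`, each term is at most `n! S(n+1, k+1)` in absolute value.
-/

/-- The logistic function. -/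
noncomputable def logistic (x : ℝ) : ℝ := 1 / (1 + Real.exp (-x))

/-- Stirling numbers of the second kind. -/
def stirling2 : ℕ → ℕ → ℕ
  | 0, 0 => 1
  | 0, _ + 1 => 0
  | _ + 1, 0 => 0
  | m + 1, n + 1 => (n + 1) * stirling2 m (n + 1) + stirling2 m n

open Finset Nat

theorem logistic_eq_sigmoid : logistic = Real.sigmoid :=
  funext fun _ => one_div _

theorem stirling2_eq_stirlingSecond : ∀ m k, stirling2 m k = stirlingSecond m k
  | 0, 0 | 0, _ + 1 | _ + 1, 0 => rfl
  | m + 1, k + 1 => by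
    rw [stirling2, stirlingSecond_succ_succ, stirling2_eq_stirlingSecond m (k + 1),
      stirling2_eq_stirlingSecond m k]

namespace Real

/-- The coefficient of `sigmoid ^ (k + 1)` in the `n`-th derivative of `sigmoid`: the paper's
`k` is our `k + 1`. -/
def sigmoidDerivCoeff (n k : ℕ) : ℝ := (-1) ^ k * k ! * stirlingSecond (n + 1) (k + 1)

theorem sigmoidDerivCoeff_eq_zero_of_lt {n k : ℕ} (h : n < k) : sigmoidDerivCoeff n k = 0 := by
  simp [sigmoidDerivCoeff, stirlingSecond_eq_zero_of_lt (Nat.succ_lt_succ h)]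

theorem sigmoidDerivCoeff_succ (n k : ℕ) :
    sigmoidDerivCoeff (n + 1) k =
      (k + 1) * sigmoidDerivCoeff n k - k * sigmoidDerivCoeff n (k - 1) := by
  cases k with
  | zero => simp [sigmoidDerivCoeff, stirlingSecond_succ_succ]
  | succ j =>
    simp only [sigmoidDerivCoeff, stirlingSecond_succ_succ (n + 1) (j + 1), factorial_succ,
      Nat.add_sub_cancel]
    push_cast
    ring

theorem abs_sigmoidDerivCoeff_le {n k : ℕ} (h : k ≤ n) :
    |sigmoidDerivCoeff n k| ≤ n ! * stirlingSecond (n + 1) (k + 1) := by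
  rw [sigmoidDerivCoeff, abs_mul, abs_mul, abs_pow, abs_neg, abs_one, one_pow, one_mul,
    Nat.abs_cast, Nat.abs_cast]
  gcongr

theorem hasDerivAt_sigmoid_pow (k : ℕ) (x : ℝ) :
    HasDerivAt (fun y => sigmoid y ^ (k + 1))
      ((k + 1) * (sigmoid x ^ (k + 1) - sigmoid x ^ (k + 2))) x := by
  refine ((hasDerivAt_sigmoid x).fun_pow (k + 1)).congr_deriv ?_
  push_cast
  ring

theorem sum_sigmoidDerivCoeff_succ_mul_pow (n : ℕ) (s : ℝ) :
    ∑ k ∈ range (n + 2), sigmoidDerivCoeff (n + 1) k * s ^ (k + 1) =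
      ∑ k ∈ range (n + 1), sigmoidDerivCoeff n k * ((k + 1) * (s ^ (k + 1) - s ^ (k + 2))) := by
  have h_top : ∑ k ∈ range (n + 2), (k + 1) * sigmoidDerivCoeff n k * s ^ (k + 1) =
      ∑ k ∈ range (n + 1), (k + 1) * sigmoidDerivCoeff n k * s ^ (k + 1) := by
    rw [sum_range_succ, sigmoidDerivCoeff_eq_zero_of_lt n.lt_succ_self, mul_zero, zero_mul,
      add_zero]
  have h_shift : ∑ k ∈ range (n + 2), k * sigmoidDerivCoeff n (k - 1) * s ^ (k + 1) =
      ∑ k ∈ range (n + 1), (k + 1) * sigmoidDerivCoeff n k * s ^ (k + 2) := by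
    simp [sum_range_succ' _ (n + 1)]
  simp only [sigmoidDerivCoeff_succ, sub_mul, sum_sub_distrib, h_top, h_shift]
  rw [← sum_sub_distrib]
  exact sum_congr rfl fun k _ => by ring

theorem iteratedDeriv_sigmoid (n : ℕ) (x : ℝ) :
    iteratedDeriv n sigmoid x =
      ∑ k ∈ range (n + 1), sigmoidDerivCoeff n k * sigmoid x ^ (k + 1) := by
  induction n generalizing x with
  | zero => simp [sigmoidDerivCoeff, stirlingSecond_self]
  | succ n ih =>
    rw [iteratedDeriv_succ, funext ih, sum_sigmoidDerivCoeff_succ_mul_pow]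
    exact (HasDerivAt.fun_sum fun k _ => (hasDerivAt_sigmoid_pow k x).const_mul _).deriv

theorem abs_iteratedDeriv_sigmoid_le (n : ℕ) (x : ℝ) :
    |iteratedDeriv n sigmoid x| ≤
      n ! * ∑ k ∈ range (n + 1), (stirlingSecond (n + 1) (k + 1) : ℝ) := by
  rw [iteratedDeriv_sigmoid, mul_sum]
  refine (abs_sum_le_sum_abs _ _).trans (sum_le_sum fun k hk => ?_)
  rw [abs_mul, abs_pow, abs_of_pos (sigmoid_pos x)]
  calc |sigmoidDerivCoeff n k| * sigmoid x ^ (k + 1) ≤ |sigmoidDerivCoeff n k| :=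
        mul_le_of_le_one_right (abs_nonneg _) (pow_le_one₀ (sigmoid_nonneg x) (sigmoid_le_one x))
    _ ≤ _ := abs_sigmoidDerivCoeff_le (Nat.lt_succ_iff.mp (mem_range.mp hk))

end Real

theorem stmt_15_general (n : ℕ) (x : ℝ) :
    |iteratedDeriv n logistic x| ≤
      (n.factorial : ℝ) * ∑ k ∈ Finset.Icc 1 (n + 1), (stirling2 (n + 1) k : ℝ) := by
  have hIcc : Icc 1 (n + 1) = Ico (0 + 1) (n + 1 + 1) := by
    rw [Ico_add_one_right_eq_Icc]
  rw [logistic_eq_sigmoid, hIcc, ← sum_Ico_add', ← range_eq_Ico]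
  simpa only [stirling2_eq_stirlingSecond, add_comm 1] using Real.abs_iteratedDeriv_sigmoid_le n x

theorem stmt_15 (n : ℕ) (hn : 1 ≤ n) (x : ℝ) :
    |iteratedDeriv n logistic x| ≤
      (n.factorial : ℝ) * ∑ k ∈ Finset.Icc 1 (n + 1), (stirling2 (n + 1) k : ℝ) :=
  stmt_15_general n x
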